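/- arXiv:1906.01313 — 7 statements merged into one kernel-verified Lean document; each statement's English description precedes it below -/
import Mathlib

section
/- (Douglas's Lemma) Let A and B be bounded operators on a Hilbert space H. There exists a contraction C on H with A = BC if and only if AA* ⪯ BB*. -/
open ContinuousLinearMap

private lemma re_inner_comp_adjoint
    {H : Type*} [NormedAddCommGroup H] [InnerProductSpace ℂ H] [CompleteSpace H]
    (T : H →L[ℂ] H) (x : H) :
    RCLike.re (inner ℂ ((T ∘L adjoint T) x) x : ℂ) = ‖adjoint T x‖ ^ 2 := by
  rw [comp_apply]
  nth_rewrite 1 [← adjoint_adjoint T]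
  rw [adjoint_inner_left, inner_self_eq_norm_sq]

set_option maxHeartbeats 1000000 in
/-- Douglas's Lemma: there exists a contraction `C` with `A = B C` if and only if
`A A* ⪯ B B*` in the Loewner order. -/
theorem douglas_lemma
    {H : Type*} [NormedAddCommGroup H] [InnerProductSpace ℂ H] [CompleteSpace H]
    (A B : H →L[ℂ] H) :
    (∃ C : H →L[ℂ] H, ‖C‖ ≤ 1 ∧ A = B ∘L C) ↔
      (B ∘L adjoint B - A ∘L adjoint A).IsPositive := by
  constructor
  · rintro ⟨C, hC, rfl⟩
    constructor
    · rw [← isSelfAdjoint_iff_isSymmetric, IsSelfAdjoint, star_sub]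
      simp [star_eq_adjoint, adjoint_comp, adjoint_adjoint, comp_assoc]
    · intro x
      rw [reApplyInnerSelf, sub_apply, inner_sub_left, map_sub,
        re_inner_comp_adjoint, re_inner_comp_adjoint, sub_nonneg]
      have h1 : adjoint (B ∘L C) x = adjoint C (adjoint B x) := by
        rw [adjoint_comp, comp_apply]
      rw [h1]
      have h2 : ‖adjoint C (adjoint B x)‖ ≤ ‖adjoint C‖ * ‖adjoint B x‖ :=
        le_opNorm _ _
      have h3 : ‖adjoint C‖ ≤ 1 := by
        rw [show ‖adjoint C‖ = ‖C‖ from LinearIsometryEquiv.norm_map adjoint C]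
        exact hC
      calc ‖adjoint C (adjoint B x)‖ ^ 2
          ≤ (‖adjoint C‖ * ‖adjoint B x‖) ^ 2 := by
            apply pow_le_pow_left₀ (norm_nonneg _) h2
        _ ≤ 1 * ‖adjoint B x‖ ^ 2 := by
            rw [mul_pow]
            exact mul_le_mul_of_nonneg_right
              (pow_le_one₀ (norm_nonneg _) h3) (sq_nonneg _)
        _ = ‖adjoint B x‖ ^ 2 := one_mul _
  · intro hpos
    -- key inequality: ‖A* x‖ ≤ ‖B* x‖
    have key : ∀ x : H, ‖adjoint A x‖ ≤ ‖adjoint B x‖ := by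
      intro x
      have h := hpos.2 x
      rw [reApplyInnerSelf, sub_apply, inner_sub_left, map_sub,
        re_inner_comp_adjoint, re_inner_comp_adjoint, sub_nonneg] at h
      exact pow_le_pow_iff_left₀ (norm_nonneg _) (norm_nonneg _) two_ne_zero |>.mp h
    have welldef : ∀ x y : H, adjoint B x = adjoint B y → adjoint A x = adjoint A y := by
      intro x y hxy
      have : adjoint A x - adjoint A y = adjoint A (x - y) := by rw [map_sub]
      rw [← sub_eq_zero, this, ← norm_le_zero_iff]
      calc ‖adjoint A (x - y)‖ ≤ ‖adjoint B (x - y)‖ := key _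
        _ = 0 := by rw [map_sub, hxy, sub_self, norm_zero]
    set S : Submodule ℂ H := LinearMap.range ((adjoint B).toLinearMap) with hS
    set K : Submodule ℂ H := S.topologicalClosure with hK
    -- selection function
    have hmem : ∀ y : S, ∃ x : H, adjoint B x = (y : H) := fun y => y.2
    let sel : S → H := fun y => (hmem y).choose
    have hsel : ∀ y : S, adjoint B (sel y) = (y : H) := fun y => (hmem y).choose_spec
    -- the map g₀ : S →ₗ H, B* x ↦ A* x
    let g₀ : S →ₗ[ℂ] H :=
      { toFun := fun y => adjoint A (sel y)
        map_add' := by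
          intro y z
          have : adjoint B (sel (y + z)) = adjoint B (sel y + sel z) := by
            rw [map_add, hsel, hsel, hsel]; rfl
          show adjoint A (sel (y + z)) = adjoint A (sel y) + adjoint A (sel z)
          rw [welldef _ _ this, map_add]
        map_smul' := by
          intro c y
          have : adjoint B (sel (c • y)) = adjoint B (c • sel y) := by
            rw [map_smul, hsel, hsel]; rfl
          show adjoint A (sel (c • y)) = c • adjoint A (sel y)
          rw [welldef _ _ this, map_smul] }
    have g₀_bound : ∀ y : S, ‖g₀ y‖ ≤ 1 * ‖y‖ := by
      intro y
      rw [one_mul]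
      calc ‖adjoint A (sel y)‖ ≤ ‖adjoint B (sel y)‖ := key _
        _ = ‖(y : H)‖ := by rw [hsel]
    let g : S →L[ℂ] H := g₀.mkContinuous 1 g₀_bound
    have hg_norm : ‖g‖ ≤ 1 := g₀.mkContinuous_norm_le zero_le_one g₀_bound
    -- the inclusion e : S →L K
    have hSK : S ≤ K := Submodule.le_topologicalClosure S
    let e₀ : S →ₗ[ℂ] K := Submodule.inclusion hSK
    have he₀ : ∀ y : S, ‖e₀ y‖ = ‖y‖ := fun y => rfl
    let e : S →L[ℂ] K := e₀.mkContinuous 1 (fun y => by rw [he₀, one_mul])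
    have h_dense : DenseRange e := by
      intro k
      have hk : (k : H) ∈ closure (S : Set H) := by
        have h : (k : H) ∈ (S.topologicalClosure : Set H) := k.2
        rwa [Submodule.topologicalClosure_coe] at h
      rw [closure_subtype]
      have himg : Subtype.val '' Set.range e = (S : Set H) := by
        ext z
        constructor
        · rintro ⟨w, ⟨s, rfl⟩, rfl⟩
          exact s.2
        · rintro hz
          exact ⟨e ⟨z, hz⟩, ⟨⟨z, hz⟩, rfl⟩, rfl⟩
      rw [himg]
      exact hk
    have h_e : ∀ y : S, ‖y‖ ≤ (1 : NNReal) * ‖e y‖ := by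
      intro y; rw [NNReal.coe_one, one_mul]; exact le_of_eq (he₀ y).symm
    let ext : K →L[ℂ] H :=
      g.extend e
    have hext_norm : ‖ext‖ ≤ 1 := by
      have := g.opNorm_extend_le h_dense h_e
      simpa using this.trans (by simpa using hg_norm)
    haveI : CompleteSpace K := S.isClosed_topologicalClosure.completeSpace_coe
    let D : H →L[ℂ] H := ext ∘L (K.orthogonalProjectionOnto)
    have hD_norm : ‖D‖ ≤ 1 := by
      refine opNorm_le_bound _ zero_le_one fun x => ?_
      have h1 : ‖D x‖ ≤ ‖ext‖ * ‖K.orthogonalProjectionOnto x‖ := ext.le_opNorm _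
      have h2 : ‖K.orthogonalProjectionOnto x‖ ≤ 1 * ‖x‖ := by
        calc ‖K.orthogonalProjectionOnto x‖
            ≤ ‖(K.orthogonalProjectionOnto : H →L[ℂ] K)‖ * ‖x‖ := le_opNorm _ _
          _ ≤ 1 * ‖x‖ := by
              exact mul_le_mul_of_nonneg_right (K.orthogonalProjectionOnto_norm_le)
                (norm_nonneg _)
      calc ‖D x‖ ≤ ‖ext‖ * ‖K.orthogonalProjectionOnto x‖ := h1
        _ ≤ 1 * (1 * ‖x‖) := by
            exact mul_le_mul hext_norm h2 (norm_nonneg _) zero_le_one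
        _ = 1 * ‖x‖ := by ring
    have hD_eval : ∀ x : H, D (adjoint B x) = adjoint A x := by
      intro x
      have hmemS : adjoint B x ∈ S := ⟨x, rfl⟩
      have hmemK : adjoint B x ∈ K := hSK hmemS
      have hproj : K.orthogonalProjectionOnto (adjoint B x) = ⟨adjoint B x, hmemK⟩ :=
        K.orthogonalProjectionOnto_mem_subspace_eq_self (⟨adjoint B x, hmemK⟩ : K)
      have hcoe : (⟨adjoint B x, hmemK⟩ : K) = e ⟨adjoint B x, hmemS⟩ := rfl
      rw [comp_apply, hproj, hcoe, ContinuousLinearMap.extend_eq _ h_dense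
        (isUniformEmbedding_of_bound _ h_e).isUniformInducing]
      show g₀ _ = _
      exact welldef _ _ (hsel ⟨adjoint B x, hmemS⟩)
    refine ⟨adjoint D, ?_, ?_⟩
    · rw [show ‖adjoint D‖ = ‖D‖ from LinearIsometryEquiv.norm_map adjoint D]
      exact hD_norm
    · have h1 : adjoint A = D ∘L adjoint B := by
        ext x
        rw [comp_apply, hD_eval]
      calc A = adjoint (adjoint A) := (adjoint_adjoint A).symm
        _ = adjoint (D ∘L adjoint B) := by rw [h1]
        _ = adjoint (adjoint B) ∘L adjoint D := adjoint_comp D (adjoint B)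
        _ = B ∘L adjoint D := by rw [adjoint_adjoint]
end

section
/- Let P be a contraction on H and Q = SOT-lim P*ⁿPⁿ. Then the map X : Q^{1/2}h ↦ Q^{1/2}Ph, defined on the range of Q^{1/2}, extends to an isometry of the closure of Ran Q^{1/2} into itself. -/
open ContinuousLinearMap Filter Topology
open scoped InnerProductSpace

/-- For a contraction `P` with asymptotic limit `Q = SOT-lim P*ⁿPⁿ` and positive square
root `R = Q^{1/2}`, the map `Q^{1/2}h ↦ Q^{1/2}Ph` extends to an isometry of the closure
of `Ran Q^{1/2}` into itself. -/
theorem isometry_on_range_of_asymptotic_limit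
    {H : Type*} [NormedAddCommGroup H] [InnerProductSpace ℂ H] [CompleteSpace H]
    (P : H →L[ℂ] H) (hP : ‖P‖ ≤ 1)
    (Q : H →L[ℂ] H)
    (hQ : ∀ h : H, Tendsto (fun n : ℕ => (((adjoint P) ^ n) ∘L (P ^ n)) h) atTop (nhds (Q h)))
    (R : H →L[ℂ] H) (hRpos : R.IsPositive) (hRsq : R ∘L R = Q) :
    (∀ h : H, ‖R (P h)‖ = ‖R h‖) ∧
    ∃ X : (LinearMap.range (R : H →ₗ[ℂ] H)).topologicalClosure →L[ℂ] (LinearMap.range (R : H →ₗ[ℂ] H)).topologicalClosure,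
      (∀ v, ‖X v‖ = ‖v‖) ∧
      ∀ h : H,
        (X ⟨R h, Submodule.le_topologicalClosure _ (LinearMap.mem_range_self (R : H →ₗ[ℂ] H) h)⟩ : H)
          = R (P h) := by
  -- Q = P* Q P pointwise
  have hQP : ∀ h : H, Q h = adjoint P (Q (P h)) := by
    intro h
    have h1 : Tendsto (fun n : ℕ => (((adjoint P) ^ (n+1)) ∘L (P ^ (n+1))) h) atTop
        (nhds (Q h)) := (hQ h).comp (tendsto_add_atTop_nat 1)
    have h2 : Tendsto (fun n : ℕ => (((adjoint P) ^ (n+1)) ∘L (P ^ (n+1))) h) atTop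
        (nhds (adjoint P (Q (P h)))) := by
      have h3 := ((adjoint P).continuous.tendsto _).comp (hQ (P h))
      have heq : ∀ n : ℕ, (((adjoint P) ^ (n+1)) ∘L (P ^ (n+1))) h
          = adjoint P ((((adjoint P) ^ n) ∘L (P ^ n)) (P h)) := by
        intro n
        rw [ContinuousLinearMap.comp_apply, ContinuousLinearMap.comp_apply,
          pow_succ P, pow_succ' (adjoint P), ContinuousLinearMap.mul_apply,
          ContinuousLinearMap.mul_apply]
      simpa only [Function.comp_def, heq] using h3
    exact tendsto_nhds_unique h1 h2
  have hsa : adjoint R = R := hRpos.isSelfAdjoint.adjoint_eq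
  have hinner : ∀ x : H, (‖R x‖ : ℝ) ^ 2 = RCLike.re (⟪x, Q x⟫_ℂ) := by
    intro x
    have : ⟪R x, R x⟫_ℂ = ⟪x, Q x⟫_ℂ := by
      calc ⟪R x, R x⟫_ℂ = ⟪adjoint R x, R x⟫_ℂ := by rw [hsa]
        _ = ⟪x, R (R x)⟫_ℂ := by rw [adjoint_inner_left]
        _ = ⟪x, Q x⟫_ℂ := by rw [← hRsq]; rfl
    rw [← inner_self_eq_norm_sq (𝕜 := ℂ), this]
  have key : ∀ h : H, ‖R (P h)‖ = ‖R h‖ := by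
    intro h
    have hsq : (‖R (P h)‖ : ℝ) ^ 2 = (‖R h‖ : ℝ) ^ 2 := by
      rw [hinner, hinner]
      congr 1
      rw [hQP h, adjoint_inner_right]
    have := congrArg Real.sqrt hsq
    rwa [Real.sqrt_sq (norm_nonneg _), Real.sqrt_sq (norm_nonneg _)] at this
  refine ⟨key, ?_⟩
  set K := LinearMap.range (R : H →ₗ[ℂ] H) with hK
  set S := K.topologicalClosure with hS
  haveI : CompleteSpace S := (Submodule.isClosed_topologicalClosure _).completeSpace_coe
  -- the map g : H →ₗ S, h ↦ R(Ph)
  let g : H →ₗ[ℂ] S :=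
    { toFun := fun h => ⟨R (P h),
        Submodule.le_topologicalClosure _ (LinearMap.mem_range_self (R : H →ₗ[ℂ] H) (P h))⟩
      map_add' := fun x y => by ext; simp
      map_smul' := fun c x => by ext; simp }
  have hgker : LinearMap.ker (R : H →ₗ[ℂ] H) ≤ LinearMap.ker g := by
    intro h hh
    have : R h = 0 := hh
    have h0 : ‖R (P h)‖ = 0 := by rw [key h, this, norm_zero]
    have : R (P h) = 0 := norm_eq_zero.mp h0
    ext
    simpa [g] using this
  -- f : K →ₗ S
  let e := LinearMap.quotKerEquivRange (R : H →ₗ[ℂ] H)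
  let f : K →ₗ[ℂ] S :=
    ((LinearMap.ker (R : H →ₗ[ℂ] H)).liftQ g hgker).comp e.symm.toLinearMap
  have hf_apply : ∀ (h : H) (hm : R h ∈ K), f ⟨R h, hm⟩ = g h := by
    intro h hm
    have : e.symm ⟨R h, hm⟩ = Submodule.Quotient.mk h :=
      LinearMap.quotKerEquivRange_symm_apply_image (R : H →ₗ[ℂ] H) h hm
    simp only [f, LinearMap.coe_comp, Function.comp_apply, LinearEquiv.coe_coe]
    exact (congrArg ((LinearMap.ker (R : H →ₗ[ℂ] H)).liftQ g hgker) this).trans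
      (Submodule.liftQ_apply _ g h)
  have hf_norm : ∀ v : K, ‖f v‖ = ‖v‖ := by
    rintro ⟨v, h, rfl⟩
    refine (congrArg norm (hf_apply h (LinearMap.mem_range_self (R : H →ₗ[ℂ] H) h))).trans ?_
    show ‖R (P h)‖ = ‖R h‖
    exact key h
  let f' : K →L[ℂ] S := f.mkContinuous 1 (fun v => by rw [hf_norm, one_mul])
  -- inclusion K →L S
  let ι : K →L[ℂ] S := (Submodule.inclusion (K.le_topologicalClosure)).mkContinuous 1
    (fun v => by rw [one_mul]; rfl)
  have hι_iso : Isometry ι := AddMonoidHomClass.isometry_of_norm ι (fun v => rfl)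
  have hι_dense : DenseRange ι := by
    intro s
    rw [closure_subtype]
    have : ((↑) : S → H) '' Set.range ι = (K : Set H) := by
      ext x
      constructor
      · rintro ⟨y, ⟨v, rfl⟩, rfl⟩; exact v.2
      · intro hx; exact ⟨ι ⟨x, hx⟩, ⟨⟨x, hx⟩, rfl⟩, rfl⟩
    rw [this]
    have := s.2
    rwa [← Submodule.topologicalClosure_coe]
  let X : S →L[ℂ] S := f'.extend ι
  have hXι : ∀ v : K, X (ι v) = f' v := fun v =>
    ContinuousLinearMap.extend_eq (f := f') (e := ι) hι_dense hι_iso.isUniformInducing v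
  have hXnorm : ∀ v : S, ‖X v‖ = ‖v‖ := by
    have : (fun v : S => ‖X v‖) = fun v : S => ‖v‖ := by
      refine hι_dense.equalizer (continuous_norm.comp X.continuous) continuous_norm ?_
      funext v
      simp only [Function.comp_apply, hXι v]
      rw [show ‖f' v‖ = ‖v‖ from hf_norm v]
      rfl
    exact fun v => congrFun this v
  refine ⟨X, hXnorm, fun h => ?_⟩
  have : (⟨R h, Submodule.le_topologicalClosure _ (LinearMap.mem_range_self (R : H →ₗ[ℂ] H) h)⟩ : S)
      = ι ⟨R h, LinearMap.mem_range_self (R : H →ₗ[ℂ] H) h⟩ := rfl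
  rw [this, hXι]
  show ((f ⟨R h, LinearMap.mem_range_self (R : H →ₗ[ℂ] H) h⟩ : S) : H) = R (P h)
  rw [hf_apply]
  rfl
end

section
/- Let T₁,…,T_d be commuting contractions on H with product P, Q = SOT-lim P*ⁿPⁿ, and let X be a bounded operator commuting with every Tⱼ. Then ‖Q^{1/2}Xh‖ ≤ ‖X‖·‖Q^{1/2}h‖ for all h ∈ H; consequently there is a bounded operator X̃ on the closure of Ran Q^{1/2} with X̃ Q^{1/2}h = Q^{1/2}Xh and ‖X̃‖ ≤ ‖X‖. -/
open ContinuousLinearMap Filter Topology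

/-- If `X` commutes with the commuting contractions `T₁,…,T_d` whose product is `P`,
`Q = SOT-lim P*ⁿPⁿ` and `R = Q^{1/2}`, then `‖Q^{1/2}Xh‖ ≤ ‖X‖·‖Q^{1/2}h‖`, and hence
there is an operator `X̃` on the closure of `Ran Q^{1/2}` with `X̃Q^{1/2}h = Q^{1/2}Xh`
and `‖X̃‖ ≤ ‖X‖`. -/
theorem commutant_induces_operator_on_range
    {H : Type*} [NormedAddCommGroup H] [InnerProductSpace ℂ H] [CompleteSpace H]
    (d : ℕ) (T : Fin d → (H →L[ℂ] H))
    (hTcomm : ∀ i j, T i ∘L T j = T j ∘L T i)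
    (hTcontr : ∀ j, ‖T j‖ ≤ 1)
    (P : H →L[ℂ] H) (hP : P = (List.ofFn T).prod)
    (Q : H →L[ℂ] H)
    (hQ : ∀ h : H, Tendsto (fun n : ℕ => (((adjoint P) ^ n) ∘L (P ^ n)) h) atTop (nhds (Q h)))
    (R : H →L[ℂ] H) (hRpos : R.IsPositive) (hRsq : R ∘L R = Q)
    (X : H →L[ℂ] H) (hX : ∀ j, X ∘L T j = T j ∘L X) :
    (∀ h : H, ‖R (X h)‖ ≤ ‖X‖ * ‖R h‖) ∧
    ∃ Xt : (LinearMap.range (R : H →ₗ[ℂ] H)).topologicalClosure →L[ℂ] (LinearMap.range (R : H →ₗ[ℂ] H)).topologicalClosure,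
      ‖Xt‖ ≤ ‖X‖ ∧
      ∀ h : H,
        (Xt ⟨R h, Submodule.le_topologicalClosure _ (LinearMap.mem_range_self (R : H →ₗ[ℂ] H) h)⟩ : H)
          = R (X h) := by
  -- X commutes with P
  have hc : Commute X P := by
    rw [hP]
    refine Commute.list_prod_right _ _ ?_
    intro a ha
    obtain ⟨j, rfl⟩ := List.mem_ofFn.mp ha
    exact hX j
  have hXPn : ∀ n : ℕ, ∀ y : H, (P ^ n) (X y) = X ((P ^ n) y) := by
    intro n y
    have h1 : (P ^ n) * X = X * (P ^ n) := (hc.pow_right n).symm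
    calc (P ^ n) (X y) = ((P ^ n) * X) y := rfl
      _ = (X * (P ^ n)) y := by rw [h1]
      _ = X ((P ^ n) y) := rfl
  -- the norm limit
  have hlim : ∀ y : H, Tendsto (fun n : ℕ => ‖(P ^ n) y‖ ^ 2) atTop (nhds (‖R y‖ ^ 2)) := by
    intro y
    have h1 : Tendsto (fun n : ℕ => (inner ℂ ((((adjoint P) ^ n) ∘L (P ^ n)) y) y : ℂ))
        atTop (nhds (inner ℂ (Q y) y)) := by
      exact ((continuous_id.inner continuous_const).tendsto _).comp (hQ y)
    have h2 : ∀ n : ℕ, (inner ℂ ((((adjoint P) ^ n) ∘L (P ^ n)) y) y : ℂ)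
        = ((‖(P ^ n) y‖ : ℂ)) ^ 2 := by
      intro n
      have hpn : (adjoint P) ^ n = adjoint (P ^ n) := by
        rw [← star_eq_adjoint, ← star_eq_adjoint, ← star_pow]
      have : (((adjoint P) ^ n) ∘L (P ^ n)) y = (adjoint (P ^ n)) ((P ^ n) y) := by
        rw [ContinuousLinearMap.comp_apply, hpn]
      rw [this, adjoint_inner_left, inner_self_eq_norm_sq_to_K]
      norm_cast
    have h3 : (inner ℂ (Q y) y : ℂ) = ((‖R y‖ : ℂ)) ^ 2 := by
      have : Q y = R (R y) := by rw [← hRsq]; rfl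
      rw [this]
      nth_rewrite 1 [← hRpos.isSelfAdjoint.adjoint_eq]
      rw [adjoint_inner_left, inner_self_eq_norm_sq_to_K]
      norm_cast
    rw [h3] at h1
    have h4 : Tendsto (fun n : ℕ => ((‖(P ^ n) y‖ : ℂ)) ^ 2) atTop
        (nhds (((‖R y‖ : ℂ)) ^ 2)) := by
      simpa only [h2] using h1
    have := (Complex.continuous_re.tendsto _).comp h4
    simpa [Function.comp_def, ← Complex.ofReal_pow] using this
  -- the key inequality
  have key : ∀ h : H, ‖R (X h)‖ ≤ ‖X‖ * ‖R h‖ := by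
    intro h
    have hsq : ‖R (X h)‖ ^ 2 ≤ (‖X‖ * ‖R h‖) ^ 2 := by
      have hb : Tendsto (fun n : ℕ => ‖X‖ ^ 2 * ‖(P ^ n) h‖ ^ 2) atTop
          (nhds (‖X‖ ^ 2 * ‖R h‖ ^ 2)) := (hlim h).const_mul _
      have hle : ∀ n : ℕ, ‖(P ^ n) (X h)‖ ^ 2 ≤ ‖X‖ ^ 2 * ‖(P ^ n) h‖ ^ 2 := by
        intro n
        rw [hXPn n h, ← mul_pow]
        exact pow_le_pow_left₀ (norm_nonneg _) (X.le_opNorm _) 2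
      have := le_of_tendsto_of_tendsto' (hlim (X h)) hb hle
      calc ‖R (X h)‖ ^ 2 ≤ ‖X‖ ^ 2 * ‖R h‖ ^ 2 := this
        _ = (‖X‖ * ‖R h‖) ^ 2 := by ring
    have h1 := Real.sqrt_le_sqrt hsq
    rwa [Real.sqrt_sq (norm_nonneg _),
      Real.sqrt_sq (mul_nonneg (norm_nonneg _) (norm_nonneg _))] at h1
  refine ⟨key, ?_⟩
  -- well-definedness
  have hker : ∀ h h' : H, R h = R h' → R (X h) = R (X h') := by
    intro h h' hhh
    have h1 : R (X h) - R (X h') = R (X (h - h')) := by simp [map_sub]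
    have h2 : ‖R (X (h - h'))‖ ≤ ‖X‖ * ‖R (h - h')‖ := key _
    have h3 : R (h - h') = 0 := by simp [map_sub, hhh]
    rw [h3, norm_zero, mul_zero] at h2
    have := le_antisymm h2 (norm_nonneg _)
    rw [← h1] at this
    exact sub_eq_zero.mp (norm_eq_zero.mp this)
  set K := (LinearMap.range (R : H →ₗ[ℂ] H)).topologicalClosure with hK
  have hle : LinearMap.range (R : H →ₗ[ℂ] H) ≤ K := Submodule.le_topologicalClosure _
  haveI : CompleteSpace K :=
    (Submodule.isClosed_topologicalClosure _).completeSpace_coe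
  -- pick a preimage
  have hmem : ∀ y : LinearMap.range (R : H →ₗ[ℂ] H), ∃ h : H, R h = (y : H) := fun y => y.2
  -- the map on range R
  have hRXmem : ∀ h : H, R (X h) ∈ K := fun h => hle (LinearMap.mem_range_self (R : H →ₗ[ℂ] H) _)
  let f₀ : (LinearMap.range (R : H →ₗ[ℂ] H)) →ₗ[ℂ] K :=
    { toFun := fun y => ⟨R (X (hmem y).choose), hRXmem _⟩
      map_add' := by
        intro y z
        have hy := (hmem y).choose_spec
        have hz := (hmem z).choose_spec
        have hyz := (hmem (y + z)).choose_spec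
        apply Subtype.ext
        show R (X (hmem (y + z)).choose) = R (X (hmem y).choose) + R (X (hmem z).choose)
        have : R ((hmem (y + z)).choose) = R ((hmem y).choose + (hmem z).choose) := by
          rw [map_add, hy, hz, hyz]; rfl
        rw [hker _ _ this, map_add, map_add]
      map_smul' := by
        intro c y
        have hy := (hmem y).choose_spec
        have hcy := (hmem (c • y)).choose_spec
        apply Subtype.ext
        show R (X (hmem (c • y)).choose) = c • R (X (hmem y).choose)
        have : R ((hmem (c • y)).choose) = R (c • (hmem y).choose) := by
          rw [map_smul, hy, hcy]; rfl
        rw [hker _ _ this, map_smul, map_smul] }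
  have hf₀ : ∀ y : LinearMap.range (R : H →ₗ[ℂ] H), ‖f₀ y‖ ≤ ‖X‖ * ‖y‖ := by
    intro y
    have hy := (hmem y).choose_spec
    show ‖R (X (hmem y).choose)‖ ≤ ‖X‖ * ‖y‖
    calc ‖R (X (hmem y).choose)‖ ≤ ‖X‖ * ‖R (hmem y).choose‖ := key _
      _ = ‖X‖ * ‖y‖ := by rw [hy]; rfl
  let f : (LinearMap.range (R : H →ₗ[ℂ] H)) →L[ℂ] K := LinearMap.mkContinuous f₀ ‖X‖ hf₀
  have hfval : ∀ h : H, f ⟨R h, LinearMap.mem_range_self (R : H →ₗ[ℂ] H) h⟩ = ⟨R (X h), hRXmem h⟩ := by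
    intro h
    apply Subtype.ext
    show R (X (hmem ⟨R h, LinearMap.mem_range_self (R : H →ₗ[ℂ] H) h⟩).choose) = R (X h)
    exact hker _ _ (hmem ⟨R h, LinearMap.mem_range_self (R : H →ₗ[ℂ] H) h⟩).choose_spec
  have hfnorm : ‖f‖ ≤ ‖X‖ := LinearMap.mkContinuous_norm_le f₀ (norm_nonneg X) hf₀
  -- inclusion map
  let e : (LinearMap.range (R : H →ₗ[ℂ] H)) →L[ℂ] K :=
    LinearMap.mkContinuous (Submodule.inclusion hle) 1 (fun x => by rw [one_mul]; rfl)
  have he_norm : ∀ x : LinearMap.range (R : H →ₗ[ℂ] H), ‖x‖ ≤ ((1 : NNReal) : ℝ) * ‖e x‖ := by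
    intro x; rw [NNReal.coe_one, one_mul]; rfl
  have h_dense : DenseRange e := by
    intro y
    rw [closure_subtype]
    have himg : (Subtype.val '' Set.range e : Set H) = (LinearMap.range (R : H →ₗ[ℂ] H) : Set H) := by
      ext z
      constructor
      · rintro ⟨w, ⟨x, rfl⟩, rfl⟩
        exact x.2
      · intro hz
        exact ⟨e ⟨z, hz⟩, ⟨⟨z, hz⟩, rfl⟩, rfl⟩
    rw [himg]
    exact y.2
  refine ⟨f.extend e, ?_, ?_⟩
  · calc ‖f.extend e‖ ≤ (1 : NNReal) * ‖f‖ := opNorm_extend_le f h_dense he_norm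
      _ ≤ ‖X‖ := by simpa using hfnorm
  · intro h
    have h1 : e ⟨R h, LinearMap.mem_range_self (R : H →ₗ[ℂ] H) h⟩
        = ⟨R h, hle (LinearMap.mem_range_self (R : H →ₗ[ℂ] H) h)⟩ := rfl
    have h2 := extend_eq f h_dense
      (isUniformEmbedding_of_bound e he_norm).isUniformInducing
      ⟨R h, LinearMap.mem_range_self (R : H →ₗ[ℂ] H) h⟩
    rw [h1] at h2
    rw [h2, hfval h]
end

section
/- Let T₁,…,T_d be commuting contractions on H, Q = SOT-lim P*ⁿPⁿ. The operators Xⱼ on the closure of Ran Q^{1/2} defined by XⱼQ^{1/2}h = Q^{1/2}Tⱼh pairwise commute, and their product X₁X₂⋯X_d equals the isometry X given by XQ^{1/2}h = Q^{1/2}Ph; consequently each Xⱼ is an isometry. -/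
open ContinuousLinearMap Filter Topology

/-- The operators `Xⱼ` induced on the closure of `Ran Q^{1/2}` by commuting contractions
`T₁,…,T_d` pairwise commute, their product is the operator `X` induced by the product
`P = T₁⋯T_d` (which is an isometry), and consequently each `Xⱼ` is an isometry. -/
theorem induced_operators_commute_product_isometry
    {H : Type*} [NormedAddCommGroup H] [InnerProductSpace ℂ H] [CompleteSpace H]
    (d : ℕ) (T : Fin d → (H →L[ℂ] H))
    (hTcomm : ∀ i j, T i ∘L T j = T j ∘L T i)
    (hTcontr : ∀ j, ‖T j‖ ≤ 1)
    (P : H →L[ℂ] H) (hP : P = (List.ofFn T).prod)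
    (Q : H →L[ℂ] H)
    (hQ : ∀ h : H, Tendsto (fun n : ℕ => (((adjoint P) ^ n) ∘L (P ^ n)) h) atTop (nhds (Q h)))
    (R : H →L[ℂ] H) (hRpos : R.IsPositive) (hRsq : R ∘L R = Q)
    (Xop : Fin d →
      ((LinearMap.range (R : H →ₗ[ℂ] H)).topologicalClosure →L[ℂ] (LinearMap.range (R : H →ₗ[ℂ] H)).topologicalClosure))
    (hXop : ∀ j, ∀ h : H,
      (Xop j ⟨R h, Submodule.le_topologicalClosure _ (LinearMap.mem_range_self (R : H →ₗ[ℂ] H) h)⟩ : H)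
        = R (T j h))
    (X : (LinearMap.range (R : H →ₗ[ℂ] H)).topologicalClosure →L[ℂ] (LinearMap.range (R : H →ₗ[ℂ] H)).topologicalClosure)
    (hX : ∀ h : H,
      (X ⟨R h, Submodule.le_topologicalClosure _ (LinearMap.mem_range_self (R : H →ₗ[ℂ] H) h)⟩ : H)
        = R (P h)) :
    (∀ i j, Xop i ∘L Xop j = Xop j ∘L Xop i) ∧
    (List.ofFn Xop).prod = X ∧
    (∀ v, ‖X v‖ = ‖v‖) ∧
    ∀ j, ∀ v, ‖Xop j v‖ = ‖v‖ := by
  classical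
  let ι : H → (LinearMap.range (R : H →ₗ[ℂ] H)).topologicalClosure := fun h =>
    ⟨R h, Submodule.le_topologicalClosure _ (LinearMap.mem_range_self (R : H →ₗ[ℂ] H) h)⟩
  -- density of the image of ι
  have hι : DenseRange ι := by
    intro v
    rw [closure_subtype]
    have himg : Subtype.val '' Set.range ι
        = ((LinearMap.range (R : H →ₗ[ℂ] H) : Submodule ℂ H) : Set H) := by
      ext x
      constructor
      · rintro ⟨y, ⟨h, rfl⟩, rfl⟩; exact LinearMap.mem_range_self (R : H →ₗ[ℂ] H) h
      · rintro ⟨h, rfl⟩; exact ⟨ι h, ⟨h, rfl⟩, rfl⟩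
    rw [himg, ← Submodule.topologicalClosure_coe]
    exact v.2
  have hXop' : ∀ j h, Xop j (ι h) = ι (T j h) := by
    intro j h
    apply Subtype.ext
    exact hXop j h
  have hX' : ∀ h, X (ι h) = ι (P h) := by
    intro h
    apply Subtype.ext
    exact hX h
  -- key limit : ‖P^n x‖² → ‖R x‖²
  have keylim : ∀ x : H,
      Tendsto (fun n : ℕ => ‖(P ^ n) x‖ ^ 2) atTop (nhds (‖R x‖ ^ 2)) := by
    intro x
    have h2 : Tendsto (fun n : ℕ =>
        (inner ℂ ((((adjoint P) ^ n) ∘L (P ^ n)) x) x : ℂ)) atTop (nhds (inner ℂ (Q x) x)) :=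
      (hQ x).inner tendsto_const_nhds
    have h3 : ∀ n : ℕ, (inner ℂ ((((adjoint P) ^ n) ∘L (P ^ n)) x) x : ℂ)
        = ((‖(P ^ n) x‖ ^ 2 : ℝ) : ℂ) := by
      intro n
      have hadj : (adjoint P) ^ n = adjoint (P ^ n) := by
        rw [← star_eq_adjoint, ← star_eq_adjoint, star_pow]
      rw [comp_apply, hadj, adjoint_inner_left, inner_self_eq_norm_sq_to_K]
      norm_cast
    have hQx : (inner ℂ (Q x) x : ℂ) = ((‖R x‖ ^ 2 : ℝ) : ℂ) := by
      have hR : adjoint R = R := hRpos.isSelfAdjoint.adjoint_eq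
      calc (inner ℂ (Q x) x : ℂ) = inner ℂ (R (R x)) x := by rw [← hRsq, comp_apply]
        _ = inner ℂ ((adjoint R) (R x)) x := by rw [hR]
        _ = inner ℂ (R x) (R x) := adjoint_inner_left R x (R x)
        _ = ((‖R x‖ ^ 2 : ℝ) : ℂ) := by rw [inner_self_eq_norm_sq_to_K]; norm_cast
    rw [hQx] at h2
    simp only [h3] at h2
    have h4 := (Complex.continuous_re.tendsto _).comp h2
    simpa only [Function.comp_def, Complex.ofReal_re] using h4
  -- commutation of T j with P
  have hcomP : ∀ j, Commute (T j) P := by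
    intro j
    rw [hP]
    refine Commute.list_prod_right _ _ fun x hx => ?_
    obtain ⟨i, rfl⟩ := List.mem_ofFn.1 hx
    exact hTcomm j i
  -- factorization: ‖P y‖ ≤ ‖T j y‖
  have hprodnorm : ∀ l : List (H →L[ℂ] H), (∀ x ∈ l, ‖x‖ ≤ 1) → ‖l.prod‖ ≤ 1 := by
    intro l
    induction l with
    | nil =>
      intro _
      simpa [List.prod_nil, ContinuousLinearMap.one_def] using
        (ContinuousLinearMap.norm_id_le : ‖(ContinuousLinearMap.id ℂ H)‖ ≤ 1)
    | cons a l ih =>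
      intro hl
      have ha := hl a (List.mem_cons_self)
      have hlp := ih fun x hx => hl x (List.mem_cons_of_mem a hx)
      calc ‖(a :: l).prod‖ = ‖a * l.prod‖ := by rw [List.prod_cons]
        _ ≤ ‖a‖ * ‖l.prod‖ := norm_mul_le _ _
        _ ≤ 1 * 1 := mul_le_mul ha hlp (norm_nonneg _) zero_le_one
        _ = 1 := one_mul 1
  have hfac : ∀ j : Fin d, ∀ y : H, ‖P y‖ ≤ ‖T j y‖ := by
    intro j y
    have hmem : T j ∈ List.ofFn T := List.mem_ofFn.2 ⟨j, rfl⟩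
    have hpw : (List.ofFn T).Pairwise Commute :=
      List.pairwise_ofFn.2 fun i k _ => hTcomm i k
    have hperm : (List.ofFn T).Perm ((List.ofFn T).erase (T j) ++ [T j]) :=
      (List.perm_cons_erase hmem).trans (List.perm_append_singleton _ _).symm
    have hPfac : P = ((List.ofFn T).erase (T j)).prod * T j := by
      rw [hP, hperm.prod_eq' hpw, List.prod_append, List.prod_singleton]
    have hSnorm : ‖((List.ofFn T).erase (T j)).prod‖ ≤ 1 := by
      refine hprodnorm _ fun x hx => ?_
      obtain ⟨i, rfl⟩ := List.mem_ofFn.1 (List.mem_of_mem_erase hx)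
      exact hTcontr i
    calc ‖P y‖ = ‖((List.ofFn T).erase (T j)).prod ((T j) y)‖ := by rw [hPfac, ContinuousLinearMap.mul_apply]
      _ ≤ ‖((List.ofFn T).erase (T j)).prod‖ * ‖(T j) y‖ := le_opNorm _ _
      _ ≤ 1 * ‖(T j) y‖ := mul_le_mul_of_nonneg_right hSnorm (norm_nonneg _)
      _ = ‖(T j) y‖ := one_mul _
  -- ‖R (P h)‖ = ‖R h‖
  have hRP : ∀ h : H, ‖R (P h)‖ = ‖R h‖ := by
    intro h
    have l1 := keylim (P h)
    have l2 : Tendsto (fun n : ℕ => ‖(P ^ (n + 1)) h‖ ^ 2) atTop (nhds (‖R h‖ ^ 2)) :=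
      (keylim h).comp (tendsto_add_atTop_nat 1)
    have hfun : (fun n : ℕ => ‖(P ^ n) (P h)‖ ^ 2) = fun n : ℕ => ‖(P ^ (n + 1)) h‖ ^ 2 := by
      funext n
      have hstep : (P ^ n) (P h) = (P ^ (n + 1)) h := by rw [pow_succ, ContinuousLinearMap.mul_apply]
      rw [hstep]
    rw [hfun] at l1
    have heq : ‖R (P h)‖ ^ 2 = ‖R h‖ ^ 2 := tendsto_nhds_unique l1 l2
    rw [← Real.sqrt_sq (norm_nonneg (R (P h))), heq, Real.sqrt_sq (norm_nonneg _)]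
  -- ‖R (T j h)‖ = ‖R h‖
  have hRT : ∀ j : Fin d, ∀ h : H, ‖R (T j h)‖ = ‖R h‖ := by
    intro j h
    have hc : ∀ n : ℕ, (P ^ n) (T j h) = T j ((P ^ n) h) := by
      intro n
      have hcn := ((hcomP j).symm.pow_left n).eq
      calc (P ^ n) (T j h) = ((P ^ n) * T j) h := (ContinuousLinearMap.mul_apply _ _ _).symm
        _ = (T j * (P ^ n)) h := by rw [hcn]
        _ = T j ((P ^ n) h) := ContinuousLinearMap.mul_apply _ _ _
    have hupper : ∀ n : ℕ, ‖T j ((P ^ n) h)‖ ^ 2 ≤ ‖(P ^ n) h‖ ^ 2 := by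
      intro n
      have hle : ‖T j ((P ^ n) h)‖ ≤ ‖(P ^ n) h‖ := by
        calc ‖T j ((P ^ n) h)‖ ≤ ‖T j‖ * ‖(P ^ n) h‖ := le_opNorm _ _
          _ ≤ 1 * ‖(P ^ n) h‖ := mul_le_mul_of_nonneg_right (hTcontr j) (norm_nonneg _)
          _ = ‖(P ^ n) h‖ := one_mul _
      exact pow_le_pow_left₀ (norm_nonneg _) hle 2
    have hlower : ∀ n : ℕ, ‖(P ^ (n + 1)) h‖ ^ 2 ≤ ‖T j ((P ^ n) h)‖ ^ 2 := by
      intro n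
      have h1 : (P ^ (n + 1)) h = P ((P ^ n) h) := by rw [pow_succ', ContinuousLinearMap.mul_apply]
      rw [h1]
      exact pow_le_pow_left₀ (norm_nonneg _) (hfac j ((P ^ n) h)) 2
    have lshift : Tendsto (fun n : ℕ => ‖(P ^ (n + 1)) h‖ ^ 2) atTop (nhds (‖R h‖ ^ 2)) :=
      (keylim h).comp (tendsto_add_atTop_nat 1)
    have lmid : Tendsto (fun n : ℕ => ‖T j ((P ^ n) h)‖ ^ 2) atTop (nhds (‖R h‖ ^ 2)) :=
      tendsto_of_tendsto_of_tendsto_of_le_of_le lshift (keylim h)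
        (fun n => hlower n) (fun n => hupper n)
    have l1 : Tendsto (fun n : ℕ => ‖T j ((P ^ n) h)‖ ^ 2) atTop
        (nhds (‖R (T j h)‖ ^ 2)) := by
      have h6 := keylim (T j h)
      simpa only [hc] using h6
    have heq : ‖R (T j h)‖ ^ 2 = ‖R h‖ ^ 2 := tendsto_nhds_unique l1 lmid
    rw [← Real.sqrt_sq (norm_nonneg (R (T j h))), heq, Real.sqrt_sq (norm_nonneg _)]
  -- norms on the submodule
  have hnorm : ∀ h : H, ‖ι h‖ = ‖R h‖ := fun h => rfl
  -- goal 1 : commutation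
  have goal1 : ∀ i j, Xop i ∘L Xop j = Xop j ∘L Xop i := by
    intro i j
    apply ContinuousLinearMap.coeFn_injective
    refine Continuous.ext_on hι (Xop i ∘L Xop j).continuous (Xop j ∘L Xop i).continuous ?_
    rintro _ ⟨h, rfl⟩
    have hij : T i (T j h) = T j (T i h) := by
      have h7 := congrArg (fun A : H →L[ℂ] H => A h) (hTcomm i j)
      simpa using h7
    simp only [comp_apply, hXop', hij]
  -- goal 2 : product
  have hprodl : ∀ (l : List (Fin d)) (h : H),
      ((l.map Xop).prod) (ι h) = ι (((l.map T).prod) h) := by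
    intro l
    induction l with
    | nil => intro h; simp
    | cons j l ih =>
      intro h
      simp only [List.map_cons, List.prod_cons, ContinuousLinearMap.mul_apply]
      rw [ih h, hXop']
  have goal2 : (List.ofFn Xop).prod = X := by
    apply ContinuousLinearMap.coeFn_injective
    refine Continuous.ext_on hι ((List.ofFn Xop).prod).continuous X.continuous ?_
    rintro _ ⟨h, rfl⟩
    show ((List.ofFn Xop).prod) (ι h) = X (ι h)
    rw [List.ofFn_eq_map, hprodl, hX']
    congr 1
    rw [← List.ofFn_eq_map, ← hP]
  -- goal 3 : X is an isometry
  have goal3 : ∀ v, ‖X v‖ = ‖v‖ := by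
    have h8 : (fun v : (LinearMap.range (R : H →ₗ[ℂ] H)).topologicalClosure => ‖X v‖)
        = fun v => ‖v‖ := by
      refine Continuous.ext_on hι (continuous_norm.comp X.continuous) continuous_norm ?_
      rintro _ ⟨h, rfl⟩
      show ‖X (ι h)‖ = ‖ι h‖
      rw [hX', hnorm, hnorm, hRP]
    intro v; exact congrFun h8 v
  -- goal 4 : each Xop j is an isometry
  have goal4 : ∀ j, ∀ v, ‖Xop j v‖ = ‖v‖ := by
    intro j
    have h9 : (fun v : (LinearMap.range (R : H →ₗ[ℂ] H)).topologicalClosure => ‖Xop j v‖)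
        = fun v => ‖v‖ := by
      refine Continuous.ext_on hι (continuous_norm.comp (Xop j).continuous) continuous_norm ?_
      rintro _ ⟨h, rfl⟩
      show ‖Xop j (ι h)‖ = ‖ι h‖
      rw [hXop', hnorm, hnorm, hRT]
    intro v; exact congrFun h9 v
  exact ⟨goal1, goal2, goal3, goal4⟩
end

section
/- Let Φ : B(H) → B(H) be a linear, positive, contractive, idempotent map whose range equals the set of operators X with P*XP = X (for a fixed contraction P), and which satisfies Φ(AXB) = AΦ(X)B whenever P*(AXB)P = A(P*XP)B holds for all X. Then Φ(I) = Q, where Q is the strong operator limit of P*ⁿPⁿ. -/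
open ContinuousLinearMap Filter Topology

local notation "⟪" x ", " y "⟫" => @inner ℂ _ _ x y

set_option maxHeartbeats 1000000 in
/-- A linear, positive, contractive, idempotent map `Φ` on `B(H)` whose range is the set
of `P`-Toeplitz operators and which satisfies the stated module property maps the
identity to `Q = SOT-lim P*ⁿPⁿ`. -/
theorem expectation_of_identity_is_asymptotic_limit
    {H : Type*} [NormedAddCommGroup H] [InnerProductSpace ℂ H] [CompleteSpace H]
    (P : H →L[ℂ] H) (hP : ‖P‖ ≤ 1)
    (Φ : (H →L[ℂ] H) →ₗ[ℂ] (H →L[ℂ] H))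
    (hpos : ∀ X : H →L[ℂ] H, X.IsPositive → (Φ X).IsPositive)
    (hcontr : ∀ X : H →L[ℂ] H, ‖Φ X‖ ≤ ‖X‖)
    (hidem : ∀ X : H →L[ℂ] H, Φ (Φ X) = Φ X)
    (hrange : ∀ X : H →L[ℂ] H, (∃ Y, Φ Y = X) ↔ adjoint P ∘L X ∘L P = X)
    (hmod : ∀ A B : H →L[ℂ] H,
      (∀ X : H →L[ℂ] H,
        adjoint P ∘L (A ∘L X ∘L B) ∘L P = A ∘L (adjoint P ∘L X ∘L P) ∘L B) →
      ∀ X : H →L[ℂ] H, Φ (A ∘L X ∘L B) = A ∘L Φ X ∘L B)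
    (Q : H →L[ℂ] H)
    (hQ : ∀ h : H, Tendsto (fun n : ℕ => (((adjoint P) ^ n) ∘L (P ^ n)) h) atTop (nhds (Q h))) :
    Φ 1 = Q := by
  set R : H →L[ℂ] H := Φ 1 with hRdef
  clear_value R
  -- basic facts about powers of P
  have hadj : ∀ n : ℕ, (adjoint P) ^ n = adjoint (P ^ n) := by
    intro n
    rw [← star_eq_adjoint, ← star_eq_adjoint, star_pow]
  have hPn : ∀ (n : ℕ) (h : H), ‖(P ^ n) h‖ ≤ ‖h‖ := by
    intro n
    induction n with
    | zero => intro h; simp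
    | succ n ih =>
      intro h
      have e : (P ^ (n + 1)) h = (P ^ n) (P h) := by rw [pow_succ]; rfl
      rw [e]
      exact (ih (P h)).trans ((P.le_opNorm h).trans
        (mul_le_of_le_one_left (norm_nonneg h) hP))
  have hterm : ∀ (n : ℕ) (x y : H),
      ⟪(((adjoint P) ^ n) ∘L (P ^ n)) x, y⟫ = ⟪(P ^ n) x, (P ^ n) y⟫ := by
    intro n x y
    rw [comp_apply, hadj, adjoint_inner_left]
  -- Q is symmetric
  have hQsym : ∀ x y : H, ⟪Q x, y⟫ = ⟪x, Q y⟫ := by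
    intro x y
    have t1 : Tendsto (fun n : ℕ => ⟪(((adjoint P) ^ n) ∘L (P ^ n)) x, y⟫) atTop
        (nhds ⟪Q x, y⟫) := (hQ x).inner tendsto_const_nhds
    have t2 : Tendsto (fun n : ℕ => ⟪x, (((adjoint P) ^ n) ∘L (P ^ n)) y⟫) atTop
        (nhds ⟪x, Q y⟫) := Tendsto.inner tendsto_const_nhds (hQ y)
    have e : (fun n : ℕ => ⟪(((adjoint P) ^ n) ∘L (P ^ n)) x, y⟫)
        = fun n : ℕ => ⟪x, (((adjoint P) ^ n) ∘L (P ^ n)) y⟫ := by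
      funext n
      rw [hterm, comp_apply, hadj, adjoint_inner_right]
    rw [e] at t1
    exact tendsto_nhds_unique t1 t2
  have hQsa : IsSelfAdjoint Q :=
    ContinuousLinearMap.isSelfAdjoint_iff_isSymmetric.mpr (fun x y => hQsym x y)
  -- Q is a Toeplitz operator
  have hQP : adjoint P ∘L Q ∘L P = Q := by
    ext h
    have t1 : Tendsto (fun n : ℕ => adjoint P ((((adjoint P) ^ n) ∘L (P ^ n)) (P h))) atTop
        (nhds (adjoint P (Q (P h)))) :=
      ((adjoint P).continuous.tendsto _).comp (hQ (P h))
    have e : (fun n : ℕ => adjoint P ((((adjoint P) ^ n) ∘L (P ^ n)) (P h)))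
        = fun n : ℕ => (((adjoint P) ^ (n + 1)) ∘L (P ^ (n + 1))) h := by
      funext n
      simp only [comp_apply, pow_succ' (adjoint P), pow_succ P, mul_apply]
      rfl
    rw [e] at t1
    have t2 : Tendsto (fun n : ℕ => (((adjoint P) ^ (n + 1)) ∘L (P ^ (n + 1))) h) atTop
        (nhds (Q h)) := (hQ h).comp (tendsto_add_atTop_nat 1)
    simpa [comp_apply] using tendsto_nhds_unique t1 t2
  -- Φ fixes Q
  have hΦQ : Φ Q = Q := by
    obtain ⟨Y, hY⟩ := (hrange Q).mpr hQP
    rw [← hY, hidem]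
  -- R is a positive Toeplitz contraction
  have hRpos : R.IsPositive := by rw [hRdef]; exact hpos 1 isPositive_one
  have hRP : adjoint P ∘L R ∘L P = R := (hrange R).mp ⟨1, hRdef.symm⟩
  have hRnorm : ‖R‖ ≤ 1 := by
    rw [hRdef]
    exact (hcontr 1).trans (by exact (ContinuousLinearMap.norm_id_le : ‖(ContinuousLinearMap.id ℂ H : H →L[ℂ] H)‖ ≤ 1))
  have hRn : ∀ n : ℕ, adjoint (P ^ n) ∘L R ∘L (P ^ n) = R := by
    intro n
    induction n with
    | zero =>
      ext h
      simp [← star_eq_adjoint]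
    | succ n ih =>
      ext h
      have e1 : (P ^ (n + 1)) h = (P ^ n) (P h) := by rw [pow_succ]; rfl
      have e2 : adjoint (P ^ (n + 1)) = adjoint P ∘L adjoint (P ^ n) := by
        rw [← hadj, pow_succ' (adjoint P), ← hadj]
        rfl
      calc (adjoint (P ^ (n + 1)) ∘L R ∘L (P ^ (n + 1))) h
          = adjoint P ((adjoint (P ^ n) ∘L R ∘L (P ^ n)) (P h)) := by
            simp only [comp_apply, e1, e2]
        _ = adjoint P (R (P h)) := by rw [ih]
        _ = R h := by
            have := congrArg (fun T : H →L[ℂ] H => T h) hRP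
            simpa [comp_apply] using this
  -- the squeezing: for each x, re ⟪R x, x⟫ ≤ re ⟪Q x, x⟫ ≤ ‖x‖²
  have hQlim : ∀ x : H,
      Tendsto (fun n : ℕ => (‖(P ^ n) x‖ : ℝ) ^ 2) atTop (nhds (RCLike.re ⟪Q x, x⟫)) := by
    intro x
    have t1 : Tendsto (fun n : ℕ => RCLike.re ⟪(((adjoint P) ^ n) ∘L (P ^ n)) x, x⟫) atTop
        (nhds (RCLike.re ⟪Q x, x⟫)) :=
      (RCLike.continuous_re.tendsto _).comp ((hQ x).inner tendsto_const_nhds)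
    have e : (fun n : ℕ => RCLike.re ⟪(((adjoint P) ^ n) ∘L (P ^ n)) x, x⟫)
        = fun n : ℕ => (‖(P ^ n) x‖ : ℝ) ^ 2 := by
      funext n
      rw [hterm]
      simp [inner_self_eq_norm_sq]
      rw [← Complex.ofReal_pow, Complex.ofReal_re]
    rwa [e] at t1
  have hRleQ : ∀ x : H, RCLike.re ⟪R x, x⟫ ≤ RCLike.re ⟪Q x, x⟫ := by
    intro x
    refine ge_of_tendsto (hQlim x) (Eventually.of_forall fun n => ?_)
    have e : ⟪R x, x⟫ = ⟪R ((P ^ n) x), (P ^ n) x⟫ := by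
      have e0 : (adjoint (P ^ n) ∘L (R ∘L (P ^ n))) x = R x := by rw [hRn]
      rw [← e0, comp_apply, comp_apply, adjoint_inner_left]
    rw [e]
    calc RCLike.re ⟪R ((P ^ n) x), (P ^ n) x⟫
        ≤ ‖⟪R ((P ^ n) x), (P ^ n) x⟫‖ := RCLike.re_le_norm _
      _ ≤ ‖R ((P ^ n) x)‖ * ‖(P ^ n) x‖ := norm_inner_le_norm _ _
      _ ≤ (‖R‖ * ‖(P ^ n) x‖) * ‖(P ^ n) x‖ := by
          gcongr; exact R.le_opNorm _
      _ ≤ (1 * ‖(P ^ n) x‖) * ‖(P ^ n) x‖ := by gcongr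
      _ = ‖(P ^ n) x‖ ^ 2 := by ring
  have hQle1 : ∀ x : H, RCLike.re ⟪Q x, x⟫ ≤ RCLike.re ⟪(1 : H →L[ℂ] H) x, x⟫ := by
    intro x
    have e1 : RCLike.re ⟪(1 : H →L[ℂ] H) x, x⟫ = ‖x‖ ^ 2 := by
      show RCLike.re ⟪x, x⟫ = ‖x‖ ^ 2
      exact inner_self_eq_norm_sq x
    rw [e1]
    refine le_of_tendsto (hQlim x) (Eventually.of_forall fun n => ?_)
    have := hPn n x
    nlinarith [norm_nonneg ((P ^ n) x)]
  -- Q ≤ Φ 1 since Q ≤ 1 and Φ is positive with Φ Q = Q, Φ 1 = R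
  have h1Qpos : ((1 : H →L[ℂ] H) - Q).IsPositive := by
    refine ⟨ContinuousLinearMap.isSelfAdjoint_iff_isSymmetric.mp (isPositive_one.isSelfAdjoint.sub hQsa), fun x => ?_⟩
    show 0 ≤ RCLike.re ⟪((1 : H →L[ℂ] H) - Q) x, x⟫
    have e : RCLike.re ⟪((1 : H →L[ℂ] H) - Q) x, x⟫
        = RCLike.re ⟪(1 : H →L[ℂ] H) x, x⟫ - RCLike.re ⟪Q x, x⟫ := by
      simp only [sub_apply, inner_sub_left, map_sub]
    rw [e]
    linarith [hQle1 x]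
  have hRQpos : (R - Q).IsPositive := by
    have := hpos _ h1Qpos
    rwa [map_sub, hΦQ, ← hRdef] at this
  have hQRpos : (Q - R).IsPositive := by
    refine ⟨ContinuousLinearMap.isSelfAdjoint_iff_isSymmetric.mp (hQsa.sub hRpos.isSelfAdjoint), fun x => ?_⟩
    show 0 ≤ RCLike.re ⟪(Q - R) x, x⟫
    have e : RCLike.re ⟪(Q - R) x, x⟫ = RCLike.re ⟪Q x, x⟫ - RCLike.re ⟪R x, x⟫ := by
      simp only [sub_apply, inner_sub_left, map_sub]
    rw [e]
    linarith [hRleQ x]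
  -- conclude via the Loewner partial order antisymmetry
  have h1 : R ≤ Q := (ContinuousLinearMap.le_def R Q).mpr hQRpos
  have h2 : Q ≤ R := (ContinuousLinearMap.le_def Q R).mpr hRQpos
  exact le_antisymm h1 h2
end

section
/- There exists a linear, completely positive, completely contractive, idempotent map Φ : B(H) → B(H) whose range is exactly the set {X ∈ B(H) : P*XP = X}, for any fixed contraction P on a Hilbert space H. (Constructed via a Banach limit applied to the sequence ⟨P*ⁿXPⁿξ, η⟩.) -/
open ContinuousLinearMap Filter Topology

noncomputable section

variable {H : Type*} [NormedAddCommGroup H] [InnerProductSpace ℂ H] [CompleteSpace H]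

instance PiLpHilbert.completeSpace (n : ℕ) : CompleteSpace (PiLp 2 fun _ : Fin n => H) :=
  inferInstance

/-- The operator on the `n`-fold Hilbert space direct sum `H ⊕₂ ⋯ ⊕₂ H` induced by an
`n × n` matrix of bounded operators on `H`. -/
def matCLM {n : ℕ} (A : Matrix (Fin n) (Fin n) (H →L[ℂ] H)) :
    (PiLp 2 fun _ : Fin n => H) →L[ℂ] (PiLp 2 fun _ : Fin n => H) :=
  ((PiLp.continuousLinearEquiv 2 ℂ (fun _ : Fin n => H)).symm.toContinuousLinearMap) ∘L
    (ContinuousLinearMap.pi fun i => ∑ j, (A i j) ∘L ContinuousLinearMap.proj j) ∘L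
    ((PiLp.continuousLinearEquiv 2 ℂ (fun _ : Fin n => H)).toContinuousLinearMap)

/-- A linear map `Φ` on `B(H)` is completely positive if all its matrix amplifications
preserve positivity. -/
def CompletelyPositive (Φ : (H →L[ℂ] H) →ₗ[ℂ] (H →L[ℂ] H)) : Prop :=
  ∀ (n : ℕ) (A : Matrix (Fin n) (Fin n) (H →L[ℂ] H)),
    (matCLM A).IsPositive → (matCLM (A.map Φ)).IsPositive

/-- A linear map `Φ` on `B(H)` is completely contractive if all its matrix
amplifications are contractive. -/
def CompletelyContractive (Φ : (H →L[ℂ] H) →ₗ[ℂ] (H →L[ℂ] H)) : Prop :=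
  ∀ (n : ℕ) (A : Matrix (Fin n) (Fin n) (H →L[ℂ] H)),
    ‖matCLM (A.map Φ)‖ ≤ ‖matCLM A‖

namespace BLaux

open BoundedContinuousFunction


/-- averaging functional -/
def avg (f : ℕ →ᵇ ℝ) (n : ℕ) : ℝ := (∑ k ∈ Finset.range (n + 1), f k) / (n + 1)

lemma avg_abs_le (f : ℕ →ᵇ ℝ) (n : ℕ) : |avg f n| ≤ ‖f‖ := by
  have h1 : |∑ k ∈ Finset.range (n + 1), f k| ≤ (n + 1 : ℝ) * ‖f‖ := by
    calc |∑ k ∈ Finset.range (n + 1), f k| ≤ ∑ k ∈ Finset.range (n + 1), |f k| :=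
          Finset.abs_sum_le_sum_abs _ _
      _ ≤ ∑ k ∈ Finset.range (n + 1), ‖f‖ := by
          refine Finset.sum_le_sum fun k _ => ?_
          simpa using f.norm_coe_le_norm k
      _ = (n + 1 : ℝ) * ‖f‖ := by
          rw [Finset.sum_const, Finset.card_range, nsmul_eq_mul]
          push_cast; ring
  have hn : (0 : ℝ) < n + 1 := by positivity
  rw [avg, abs_div, abs_of_pos hn, div_le_iff₀ hn]
  linarith [h1]

lemma avg_bddAbove (f : ℕ →ᵇ ℝ) : IsBoundedUnder (· ≤ ·) atTop (avg f) :=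
  isBoundedUnder_of ⟨‖f‖, fun n => (abs_le.1 (avg_abs_le f n)).2⟩

lemma avg_bddBelow (f : ℕ →ᵇ ℝ) : IsBoundedUnder (· ≥ ·) atTop (avg f) :=
  isBoundedUnder_of ⟨-‖f‖, fun n => (abs_le.1 (avg_abs_le f n)).1⟩

def N (f : ℕ →ᵇ ℝ) : ℝ := limsup (avg f) atTop

lemma N_le (f : ℕ →ᵇ ℝ) {C : ℝ} (h : ∀ n, f n ≤ C) : N f ≤ C := by
  refine limsup_le_of_le (avg_bddBelow f).isCoboundedUnder_le (Eventually.of_forall fun n => ?_)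
  rw [avg, div_le_iff₀ (by positivity : (0:ℝ) < n + 1)]
  calc ∑ k ∈ Finset.range (n + 1), f k ≤ ∑ k ∈ Finset.range (n + 1), C :=
        Finset.sum_le_sum fun k _ => h k
    _ = C * (n + 1) := by
        rw [Finset.sum_const, Finset.card_range, nsmul_eq_mul]
        push_cast; ring

lemma N_add (f g : ℕ →ᵇ ℝ) : N (f + g) ≤ N f + N g := by
  have h : avg (f + g) = avg f + avg g := by
    funext n
    simp [avg, Finset.sum_add_distrib, add_div]
  rw [N, h]
  exact limsup_add_le (avg_bddBelow f) (avg_bddAbove f)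
    (avg_bddBelow g).isCoboundedUnder_le (avg_bddAbove g)

lemma N_smul (c : ℝ) (hc : 0 < c) (f : ℕ →ᵇ ℝ) : N (c • f) = c * N f := by
  have h : avg (c • f) = fun n => c * avg f n := by
    funext n
    rw [avg, avg]
    simp only [BoundedContinuousFunction.coe_smul, Pi.smul_apply, smul_eq_mul]
    rw [← Finset.mul_sum, mul_div_assoc]
  rw [N, h, N]
  have key := (OrderIso.mulLeft₀ c hc).limsup_apply (f := atTop) (u := avg f)
    (avg_bddAbove f) (avg_bddBelow f).isCoboundedUnder_le
    (isBoundedUnder_of ⟨c * ‖f‖, fun n => by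
      exact
        mul_le_mul_of_nonneg_left ((abs_le.1 (avg_abs_le f n)).2) hc.le⟩)
    (isBoundedUnder_of ⟨c * (-‖f‖), fun n => by
      exact
        mul_le_mul_of_nonneg_left ((abs_le.1 (avg_abs_le f n)).1) hc.le⟩ :
        IsBoundedUnder (· ≥ ·) atTop _).isCoboundedUnder_le
  exact key.symm

/-- shift operator -/
def shift (f : ℕ →ᵇ ℝ) : ℕ →ᵇ ℝ :=
  f.compContinuous ⟨fun n => n + 1, by continuity⟩

@[simp] lemma shift_apply (f : ℕ →ᵇ ℝ) (n : ℕ) : shift f n = f (n + 1) := rfl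

lemma N_shift_sub (f : ℕ →ᵇ ℝ) : N (shift f - f) ≤ 0 := by
  have h : Tendsto (avg (shift f - f)) atTop (nhds 0) := by
    have havg : ∀ n, avg (shift f - f) n = (f (n + 1) - f 0) / (n + 1) := by
      intro n
      rw [avg]
      congr 1
      have : ∀ k ∈ Finset.range (n+1), (shift f - f) k = f (k+1) - f k := fun k _ => rfl
      rw [Finset.sum_congr rfl this, Finset.sum_range_sub (fun k => f k)]
    rw [show avg (shift f - f) = fun n => (f (n+1) - f 0) / (n+1) from funext havg]
    have hb : ∀ n : ℕ, ‖(f (n+1) - f 0) / (n+1 : ℝ)‖ ≤ 2 * ‖f‖ * (1 / (n+1)) := by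
      intro n
      have hn : (0:ℝ) < n + 1 := by positivity
      rw [norm_div, Real.norm_eq_abs (n+1:ℝ), abs_of_pos hn, mul_one_div]
      gcongr
      calc ‖f (n+1) - f 0‖ ≤ ‖f (n+1)‖ + ‖f 0‖ := norm_sub_le _ _
        _ ≤ ‖f‖ + ‖f‖ := add_le_add (f.norm_coe_le_norm _) (f.norm_coe_le_norm _)
        _ = 2 * ‖f‖ := by ring
    have h0 : Tendsto (fun n : ℕ => (1 : ℝ) / (n+1)) atTop (nhds 0) :=
      tendsto_one_div_add_atTop_nhds_zero_nat
    have h1 := h0.const_mul (2 * ‖f‖)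
    rw [mul_zero] at h1
    exact squeeze_zero_norm hb h1
  exact le_of_eq (h.limsup_eq)



lemma N_zero : N 0 = 0 := by
  have : avg (0 : ℕ →ᵇ ℝ) = fun _ => (0:ℝ) := by
    funext n; simp [avg]
  rw [N, this, limsup_const]

lemma exists_g : ∃ g : (ℕ →ᵇ ℝ) →ₗ[ℝ] ℝ, ∀ f, g f ≤ N f := by
  obtain ⟨g, -, hg⟩ := exists_extension_of_le_sublinear
    (⟨⊥, 0⟩ : (ℕ →ᵇ ℝ) →ₗ.[ℝ] ℝ) N (fun c hc x => N_smul c hc x) N_add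
    (fun x => by
      have hx : (x : ℕ →ᵇ ℝ) = 0 := (Submodule.mem_bot ℝ).1 x.2
      simp [hx, N_zero])
  exact ⟨g, hg⟩

def g : (ℕ →ᵇ ℝ) →ₗ[ℝ] ℝ := (exists_g).choose

lemma g_le (f : ℕ →ᵇ ℝ) : g f ≤ N f := (exists_g).choose_spec f

lemma g_le_of_le {f : ℕ →ᵇ ℝ} {C : ℝ} (h : ∀ n, f n ≤ C) : g f ≤ C :=
  (g_le f).trans (N_le f h)

lemma g_const (c : ℝ) : g (BoundedContinuousFunction.const ℕ c) = c := by
  have h1 : g (BoundedContinuousFunction.const ℕ c) ≤ c :=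
    g_le_of_le fun n => le_refl c
  have h2 : g (-(BoundedContinuousFunction.const ℕ c)) ≤ -c :=
    g_le_of_le fun n => le_refl (-c)
  rw [map_neg, neg_le_neg_iff] at h2
  exact le_antisymm h1 h2

lemma g_nonneg {f : ℕ →ᵇ ℝ} (h : ∀ n, 0 ≤ f n) : 0 ≤ g f := by
  have h2 : g (-f) ≤ 0 := g_le_of_le fun n => by
    simpa using h n
  rw [map_neg, neg_nonpos] at h2
  exact h2

lemma g_shift (f : ℕ →ᵇ ℝ) : g (shift f) = g f := by
  have h1 : g (shift f - f) ≤ 0 := (g_le _).trans (N_shift_sub f)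
  have h2 : g (f - shift f) ≤ 0 := by
    have heq : f - shift f = shift (-f) - (-f) := by
      ext n; simp [sub_eq_add_neg, add_comm]
    rw [heq]
    exact (g_le _).trans (N_shift_sub (-f))
  rw [map_sub] at h1 h2
  linarith


def reB (f : ℕ →ᵇ ℂ) : ℕ →ᵇ ℝ :=
  BoundedContinuousFunction.ofNormedAddCommGroup (fun n => (f n).re)
    continuous_of_discreteTopology ‖f‖
    (fun n => (Complex.abs_re_le_norm (f n)).trans (f.norm_coe_le_norm n))

def imB (f : ℕ →ᵇ ℂ) : ℕ →ᵇ ℝ :=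
  BoundedContinuousFunction.ofNormedAddCommGroup (fun n => (f n).im)
    continuous_of_discreteTopology ‖f‖
    (fun n => (Complex.abs_im_le_norm (f n)).trans (f.norm_coe_le_norm n))

@[simp] lemma reB_apply (f : ℕ →ᵇ ℂ) (n : ℕ) : reB f n = (f n).re := rfl
@[simp] lemma imB_apply (f : ℕ →ᵇ ℂ) (n : ℕ) : imB f n = (f n).im := rfl

def L (f : ℕ →ᵇ ℂ) : ℂ := ⟨g (reB f), g (imB f)⟩

@[simp] lemma L_re (f : ℕ →ᵇ ℂ) : (L f).re = g (reB f) := rfl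
@[simp] lemma L_im (f : ℕ →ᵇ ℂ) : (L f).im = g (imB f) := rfl

lemma L_add (f h : ℕ →ᵇ ℂ) : L (f + h) = L f + L h := by
  have h1 : reB (f + h) = reB f + reB h := by ext n; simp
  have h2 : imB (f + h) = imB f + imB h := by ext n; simp
  apply Complex.ext <;> simp [h1, h2]

lemma L_smul (c : ℂ) (f : ℕ →ᵇ ℂ) : L (c • f) = c * L f := by
  have h1 : reB (c • f) = c.re • reB f - c.im • imB f := by
    ext n; simp [Complex.mul_re, sub_eq_add_neg]
  have h2 : imB (c • f) = c.re • imB f + c.im • reB f := by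
    ext n; simp [Complex.mul_im]
  apply Complex.ext <;>
    simp [h1, h2, map_sub, map_add, map_smul, Complex.mul_re, Complex.mul_im,
      smul_eq_mul]

def Lc : (ℕ →ᵇ ℂ) →ₗ[ℂ] ℂ where
  toFun := L
  map_add' := L_add
  map_smul' := L_smul

@[simp] lemma Lc_apply (f : ℕ →ᵇ ℂ) : Lc f = L f := rfl

lemma L_const (c : ℂ) : L (BoundedContinuousFunction.const ℕ c) = c := by
  have h1 : reB (BoundedContinuousFunction.const ℕ c)
      = BoundedContinuousFunction.const ℕ c.re := by ext n; simp
  have h2 : imB (BoundedContinuousFunction.const ℕ c)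
      = BoundedContinuousFunction.const ℕ c.im := by ext n; simp
  apply Complex.ext <;> simp [h1, h2, g_const]

/-- complex shift -/
def shiftC (f : ℕ →ᵇ ℂ) : ℕ →ᵇ ℂ :=
  f.compContinuous ⟨fun n => n + 1, by continuity⟩

@[simp] lemma shiftC_apply (f : ℕ →ᵇ ℂ) (n : ℕ) : shiftC f n = f (n + 1) := rfl

lemma L_shift (f : ℕ →ᵇ ℂ) : L (shiftC f) = L f := by
  have h1 : reB (shiftC f) = shift (reB f) := by ext n; simp
  have h2 : imB (shiftC f) = shift (imB f) := by ext n; simp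
  apply Complex.ext <;> simp [h1, h2, g_shift]

lemma L_norm_le {f : ℕ →ᵇ ℂ} {C : ℝ} (h : ∀ n, ‖f n‖ ≤ C) : ‖L f‖ ≤ C := by
  set z := L f with hz
  rcases eq_or_ne z 0 with h0 | h0
  · rw [h0, norm_zero]
    exact le_trans (norm_nonneg (f 0)) (h 0)
  · have key : (‖z‖ : ℝ) * ‖z‖ ≤ ‖z‖ * C := by
      have hL : L ((starRingEnd ℂ z) • f) = (starRingEnd ℂ z) * z := by
        rw [L_smul, ← hz]
      have hre : g (reB ((starRingEnd ℂ z) • f)) = ‖z‖ * ‖z‖ := by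
        have : (starRingEnd ℂ z * z).re = ‖z‖ * ‖z‖ := by
          rw [mul_comm, Complex.mul_conj]
          simp [Complex.normSq_eq_norm_sq, sq]
        calc g (reB ((starRingEnd ℂ z) • f)) = (L ((starRingEnd ℂ z) • f)).re := rfl
          _ = (starRingEnd ℂ z * z).re := by rw [hL]
          _ = ‖z‖ * ‖z‖ := this
      have hb : ∀ n, reB ((starRingEnd ℂ z) • f) n ≤ ‖z‖ * C := by
        intro n
        have : ((starRingEnd ℂ z) • f) n = (starRingEnd ℂ z) * f n := rfl
        rw [reB_apply, this]
        calc ((starRingEnd ℂ z) * f n).re ≤ ‖(starRingEnd ℂ z) * f n‖ :=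
              Complex.re_le_norm _
          _ = ‖z‖ * ‖f n‖ := by rw [norm_mul, RCLike.norm_conj]
          _ ≤ ‖z‖ * C := by gcongr; exact h n
      rw [← hre]
      exact g_le_of_le hb
    exact le_of_mul_le_mul_left key (norm_pos_iff.2 h0)

lemma L_im_zero {f : ℕ →ᵇ ℂ} (h : ∀ n, (f n).im = 0) : (L f).im = 0 := by
  have : imB f = 0 := by ext n; simp [h n]
  simp [this]

lemma L_re_nonneg {f : ℕ →ᵇ ℂ} (h : ∀ n, 0 ≤ (f n).re) : 0 ≤ (L f).re := by
  simpa using g_nonneg (f := reB f) (fun n => by simpa using h n)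


end BLaux

open BLaux ContinuousLinearMap BoundedContinuousFunction

local notation "⟪" x ", " y "⟫" => @inner ℂ _ _ x y

section OpLayer

variable (P : H →L[ℂ] H)

lemma pow_apply_norm_le (hP : ‖P‖ ≤ 1) : ∀ (n : ℕ) (ξ : H), ‖(P ^ n) ξ‖ ≤ ‖ξ‖ := by
  intro n
  induction n with
  | zero => intro ξ; simp
  | succ n ih =>
    intro ξ
    have h1 : (P ^ (n + 1)) ξ = (P ^ n) (P ξ) := by
      rw [pow_succ]; rfl
    rw [h1]
    calc ‖(P ^ n) (P ξ)‖ ≤ ‖P ξ‖ := ih (P ξ)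
      _ ≤ ‖P‖ * ‖ξ‖ := P.le_opNorm ξ
      _ ≤ 1 * ‖ξ‖ := by gcongr
      _ = ‖ξ‖ := one_mul _

variable (hP : ‖P‖ ≤ 1)
include hP

lemma inner_norm_le (X : H →L[ℂ] H) (ξ η : H) (n : ℕ) :
    ‖⟪X ((P ^ n) ξ), (P ^ n) η⟫‖ ≤ ‖X‖ * ‖ξ‖ * ‖η‖ := by
  calc ‖⟪X ((P ^ n) ξ), (P ^ n) η⟫‖ ≤ ‖X ((P ^ n) ξ)‖ * ‖(P ^ n) η‖ :=
        norm_inner_le_norm _ _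
    _ ≤ (‖X‖ * ‖(P ^ n) ξ‖) * ‖(P ^ n) η‖ := by
        gcongr; exact X.le_opNorm _
    _ ≤ (‖X‖ * ‖ξ‖) * ‖η‖ := by
        gcongr <;> [exact pow_apply_norm_le P hP n ξ; exact pow_apply_norm_le P hP n η]
    _ = ‖X‖ * ‖ξ‖ * ‖η‖ := rfl

/-- The basic sequence. -/
def seqc (X : H →L[ℂ] H) (ξ η : H) : ℕ →ᵇ ℂ :=
  BoundedContinuousFunction.ofNormedAddCommGroup
    (fun n => ⟪X ((P ^ n) ξ), (P ^ n) η⟫) continuous_of_discreteTopology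
    (‖X‖ * ‖ξ‖ * ‖η‖)
    (fun n => inner_norm_le P hP X ξ η n)

@[simp] lemma seqc_apply (X : H →L[ℂ] H) (ξ η : H) (n : ℕ) :
    seqc P hP X ξ η n = ⟪X ((P ^ n) ξ), (P ^ n) η⟫ := rfl

/-- The functional `η ↦ L ⟪X Pⁿ ξ, Pⁿ η⟫`. -/
def phiFunctional (X : H →L[ℂ] H) (ξ : H) : H →L[ℂ] ℂ :=
  LinearMap.mkContinuous
    { toFun := fun η => L (seqc P hP X ξ η)
      map_add' := by
        intro η η'
        rw [← L_add]
        refine congrArg L ?_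
        ext n
        simp [inner_add_right]
      map_smul' := by
        intro c η
        show L (seqc P hP X ξ (c • η)) = c • L (seqc P hP X ξ η)
        rw [smul_eq_mul, ← L_smul]
        refine congrArg L ?_
        ext n
        simp [inner_smul_right] }
    (‖X‖ * ‖ξ‖)
    (fun η => L_norm_le fun n => by
      simpa [mul_assoc] using inner_norm_le P hP X ξ η n)

@[simp] lemma phiFunctional_apply (X : H →L[ℂ] H) (ξ η : H) :
    phiFunctional P hP X ξ η = L (seqc P hP X ξ η) := rfl

/-- The vector `Φ(X) ξ` obtained by Riesz representation. -/
def phiVec (X : H →L[ℂ] H) (ξ : H) : H :=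
  (InnerProductSpace.toDual ℂ H).symm (phiFunctional P hP X ξ)

lemma inner_phiVec (X : H →L[ℂ] H) (ξ η : H) :
    ⟪phiVec P hP X ξ, η⟫ = L (seqc P hP X ξ η) :=
  InnerProductSpace.toDual_symm_apply

lemma phiVec_norm_le (X : H →L[ℂ] H) (ξ : H) : ‖phiVec P hP X ξ‖ ≤ ‖X‖ * ‖ξ‖ := by
  rw [phiVec, LinearIsometryEquiv.norm_map]
  exact LinearMap.mkContinuous_norm_le _ (by positivity) _

/-- The map `Φ(X)` as a continuous linear operator. -/
def PhiCLM (X : H →L[ℂ] H) : H →L[ℂ] H :=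
  LinearMap.mkContinuous
    { toFun := phiVec P hP X
      map_add' := by
        intro ξ ξ'
        refine ext_inner_right ℂ fun η => ?_
        rw [inner_add_left, inner_phiVec, inner_phiVec, inner_phiVec, ← L_add]
        refine congrArg L ?_
        ext n
        simp [inner_add_left]
      map_smul' := by
        intro c ξ
        refine ext_inner_right ℂ fun η => ?_
        rw [RingHom.id_apply, inner_smul_left, inner_phiVec, inner_phiVec, ← L_smul]
        refine congrArg L ?_
        ext n
        simp [inner_smul_left, mul_comm] }
    ‖X‖ (fun ξ => by simpa using phiVec_norm_le P hP X ξ)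

lemma inner_PhiCLM (X : H →L[ℂ] H) (ξ η : H) :
    ⟪PhiCLM P hP X ξ, η⟫ = L (seqc P hP X ξ η) :=
  inner_phiVec P hP X ξ η

/-- The conditional expectation `Φ` as a linear map on `B(H)`. -/
def Phi : (H →L[ℂ] H) →ₗ[ℂ] (H →L[ℂ] H) where
  toFun := PhiCLM P hP
  map_add' := by
    intro X Y
    refine ContinuousLinearMap.ext fun ξ => ext_inner_right ℂ fun η => ?_
    rw [ContinuousLinearMap.add_apply, inner_add_left, inner_PhiCLM, inner_PhiCLM,
      inner_PhiCLM, ← L_add]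
    refine congrArg L ?_
    ext n
    simp [inner_add_left]
  map_smul' := by
    intro c X
    refine ContinuousLinearMap.ext fun ξ => ext_inner_right ℂ fun η => ?_
    rw [RingHom.id_apply, ContinuousLinearMap.smul_apply, inner_smul_left,
      inner_PhiCLM, inner_PhiCLM, ← L_smul]
    refine congrArg L ?_
    ext n
    simp [inner_smul_left, mul_comm]

lemma inner_Phi (X : H →L[ℂ] H) (ξ η : H) :
    ⟪Phi P hP X ξ, η⟫ = L (seqc P hP X ξ η) :=
  inner_phiVec P hP X ξ η

/-- `Φ(X)` is Toeplitz. -/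
lemma Phi_toeplitz (X : H →L[ℂ] H) : adjoint P ∘L (Phi P hP X) ∘L P = Phi P hP X := by
  refine ContinuousLinearMap.ext fun ξ => ext_inner_right ℂ fun η => ?_
  rw [ContinuousLinearMap.comp_apply, ContinuousLinearMap.comp_apply,
    ContinuousLinearMap.adjoint_inner_left, inner_Phi, inner_Phi]
  rw [← L_shift (seqc P hP X ξ η)]
  refine congrArg L ?_
  ext n
  simp only [BLaux.shiftC_apply, seqc_apply]
  have h1 : (P ^ n) (P ξ) = (P ^ (n + 1)) ξ := by rw [pow_succ]; rfl
  have h2 : (P ^ n) (P η) = (P ^ (n + 1)) η := by rw [pow_succ]; rfl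
  rw [h1, h2]

/-- `Φ` fixes Toeplitz operators. -/
lemma Phi_fixes (X : H →L[ℂ] H) (hX : adjoint P ∘L X ∘L P = X) : Phi P hP X = X := by
  have key : ∀ (n : ℕ) (ξ η : H), ⟪X ((P ^ n) ξ), (P ^ n) η⟫ = ⟪X ξ, η⟫ := by
    intro n
    induction n with
    | zero => intro ξ η; simp
    | succ n ih =>
      intro ξ η
      have h1 : (P ^ (n + 1)) ξ = (P ^ n) (P ξ) := by rw [pow_succ]; rfl
      have h2 : (P ^ (n + 1)) η = (P ^ n) (P η) := by rw [pow_succ]; rfl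
      rw [h1, h2, ih (P ξ) (P η)]
      have := congrArg (fun T : H →L[ℂ] H => ⟪T ξ, η⟫) hX
      simpa [ContinuousLinearMap.adjoint_inner_left] using this
  refine ContinuousLinearMap.ext fun ξ => ext_inner_right ℂ fun η => ?_
  rw [inner_Phi]
  have : seqc P hP X ξ η = BoundedContinuousFunction.const ℕ ⟪X ξ, η⟫ := by
    ext n
    exact key n ξ η
  rw [this, L_const]


end OpLayer

section MatLayer

lemma matCLM_apply {m : ℕ} (A : Matrix (Fin m) (Fin m) (H →L[ℂ] H))
    (v : PiLp 2 fun _ : Fin m => H) (i : Fin m) :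
    matCLM A v i = ∑ j, A i j (v j) := by
  simp [matCLM, ContinuousLinearMap.sum_apply]

lemma inner_matCLM {m : ℕ} (A : Matrix (Fin m) (Fin m) (H →L[ℂ] H))
    (v w : PiLp 2 fun _ : Fin m => H) :
    ⟪matCLM A v, w⟫ = ∑ i, ∑ j, ⟪A i j (v j), w i⟫ := by
  rw [PiLp.inner_apply]
  refine Finset.sum_congr rfl fun i _ => ?_
  rw [matCLM_apply, sum_inner]

def amp (P : H →L[ℂ] H) {m : ℕ} (n : ℕ) (v : PiLp 2 fun _ : Fin m => H) :
    PiLp 2 fun _ : Fin m => H :=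
  (WithLp.equiv 2 (∀ _ : Fin m, H)).symm fun i => (P ^ n) (v i)

@[simp] lemma amp_apply (P : H →L[ℂ] H) {m : ℕ} (n : ℕ)
    (v : PiLp 2 fun _ : Fin m => H) (i : Fin m) : amp P n v i = (P ^ n) (v i) := rfl

variable (P : H →L[ℂ] H) (hP : ‖P‖ ≤ 1)
include hP

lemma amp_norm_le {m : ℕ} (n : ℕ)
    (v : PiLp 2 fun _ : Fin m => H) : ‖amp P n v‖ ≤ ‖v‖ := by
  have h2 : ‖amp P n v‖ ^ 2 ≤ ‖v‖ ^ 2 := by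
    rw [PiLp.norm_sq_eq_of_L2, PiLp.norm_sq_eq_of_L2]
    exact Finset.sum_le_sum fun i _ =>
      pow_le_pow_left₀ (norm_nonneg _) (by simpa using pow_apply_norm_le P hP n (v i)) 2
  exact le_of_pow_le_pow_left₀ two_ne_zero (norm_nonneg _) h2

lemma ampInner_norm_le {m : ℕ} (A : Matrix (Fin m) (Fin m) (H →L[ℂ] H))
    (v w : PiLp 2 fun _ : Fin m => H) (n : ℕ) :
    ‖⟪matCLM A (amp P n v), amp P n w⟫‖ ≤ ‖matCLM A‖ * ‖v‖ * ‖w‖ := by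
  calc ‖⟪matCLM A (amp P n v), amp P n w⟫‖
      ≤ ‖matCLM A (amp P n v)‖ * ‖amp P n w‖ := norm_inner_le_norm _ _
    _ ≤ (‖matCLM A‖ * ‖amp P n v‖) * ‖amp P n w‖ := by
        gcongr; exact (matCLM A).le_opNorm _
    _ ≤ (‖matCLM A‖ * ‖v‖) * ‖w‖ := by
        gcongr <;> [exact amp_norm_le P hP n v; exact amp_norm_le P hP n w]
    _ = ‖matCLM A‖ * ‖v‖ * ‖w‖ := rfl

/-- The amplified sequence. -/
def seqAmp {m : ℕ} (A : Matrix (Fin m) (Fin m) (H →L[ℂ] H))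
    (v w : PiLp 2 fun _ : Fin m => H) : ℕ →ᵇ ℂ :=
  BoundedContinuousFunction.ofNormedAddCommGroup
    (fun n => ⟪matCLM A (amp P n v), amp P n w⟫) continuous_of_discreteTopology
    (‖matCLM A‖ * ‖v‖ * ‖w‖) (fun n => ampInner_norm_le P hP A v w n)

@[simp] lemma seqAmp_apply {m : ℕ} (A : Matrix (Fin m) (Fin m) (H →L[ℂ] H))
    (v w : PiLp 2 fun _ : Fin m => H) (n : ℕ) :
    seqAmp P hP A v w n = ⟪matCLM A (amp P n v), amp P n w⟫ := rfl

lemma inner_matCLM_map_Phi {m : ℕ} (A : Matrix (Fin m) (Fin m) (H →L[ℂ] H))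
    (v w : PiLp 2 fun _ : Fin m => H) :
    ⟪matCLM (A.map (Phi P hP)) v, w⟫ = BLaux.L (seqAmp P hP A v w) := by
  rw [inner_matCLM]
  have hij : ∀ (i j : Fin m),
      ⟪(A.map (Phi P hP)) i j (v j), w i⟫ = BLaux.L (seqc P hP (A i j) (v j) (w i)) := by
    intro i j
    rw [Matrix.map_apply]
    exact inner_Phi P hP (A i j) (v j) (w i)
  calc ∑ i, ∑ j, ⟪(A.map (Phi P hP)) i j (v j), w i⟫
      = ∑ i, ∑ j, BLaux.Lc (seqc P hP (A i j) (v j) (w i)) := by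
        refine Finset.sum_congr rfl fun i _ => Finset.sum_congr rfl fun j _ => hij i j
    _ = BLaux.Lc (∑ i, ∑ j, seqc P hP (A i j) (v j) (w i)) := by
        rw [map_sum]
        refine Finset.sum_congr rfl fun i _ => ?_
        rw [map_sum]
    _ = BLaux.L (seqAmp P hP A v w) := by
        rw [BLaux.Lc_apply]
        refine congrArg BLaux.L ?_
        ext n
        rw [seqAmp_apply, inner_matCLM]
        simp only [BoundedContinuousFunction.coe_sum, Finset.sum_apply]
        refine Finset.sum_congr rfl fun i _ => Finset.sum_congr rfl fun j _ => ?_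
        simp

lemma Phi_cp : CompletelyPositive (Phi P hP) := by
  intro m A hA
  rw [ContinuousLinearMap.isPositive_iff_complex] at hA ⊢
  intro z
  rw [inner_matCLM_map_Phi P hP A z z]
  set a := seqAmp P hP A z z with ha
  have hterm : ∀ n : ℕ, ((a n).im = 0) ∧ 0 ≤ (a n).re := by
    intro n
    obtain ⟨h1, h2⟩ := hA (amp P n z)
    have han : a n = ⟪matCLM A (amp P n z), amp P n z⟫ := rfl
    constructor
    · rw [han, ← h1]
      simp
    · rw [han]
      simpa using h2
  constructor
  · apply Complex.ext
    · simp
    · rw [BLaux.L_im_zero fun n => (hterm n).1]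
      simp
  · simpa using BLaux.L_re_nonneg fun n => (hterm n).2

lemma Phi_cc : CompletelyContractive (Phi P hP) := by
  intro m A
  refine ContinuousLinearMap.opNorm_le_bound _ (norm_nonneg _) fun v => ?_
  set T := matCLM (A.map (Phi P hP)) with hT
  have hvw : ∀ w, ‖⟪T v, w⟫‖ ≤ ‖matCLM A‖ * ‖v‖ * ‖w‖ := by
    intro w
    rw [hT, inner_matCLM_map_Phi P hP A v w]
    exact BLaux.L_norm_le fun n => ampInner_norm_le P hP A v w n
  have key : ‖T v‖ * ‖T v‖ ≤ ‖matCLM A‖ * ‖v‖ * ‖T v‖ := by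
    calc ‖T v‖ * ‖T v‖ = RCLike.re ⟪T v, T v⟫ := (inner_self_eq_norm_mul_norm _).symm
      _ ≤ ‖⟪T v, T v⟫‖ := RCLike.re_le_norm _
      _ ≤ ‖matCLM A‖ * ‖v‖ * ‖T v‖ := hvw (T v)
  rcases eq_or_ne ‖T v‖ 0 with h0 | h0
  · rw [h0]
    positivity
  · exact le_of_mul_le_mul_right key (lt_of_le_of_ne (norm_nonneg _) (Ne.symm h0))

end MatLayer

/-- For any contraction `P` on a Hilbert space `H` there is a completely positive,
completely contractive, idempotent linear map on `B(H)` whose range is exactly the set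
of `P`-Toeplitz operators `{X : P*XP = X}`. -/
theorem exists_toeplitz_expectation
    (P : H →L[ℂ] H) (hP : ‖P‖ ≤ 1) :
    ∃ Φ : (H →L[ℂ] H) →ₗ[ℂ] (H →L[ℂ] H),
      CompletelyPositive Φ ∧ CompletelyContractive Φ ∧
      (∀ X, Φ (Φ X) = Φ X) ∧
      (∀ X : H →L[ℂ] H, (∃ Y, Φ Y = X) ↔ adjoint P ∘L X ∘L P = X) := by
  refine ⟨Phi P hP, Phi_cp P hP, Phi_cc P hP, ?_, ?_⟩
  · intro X
    exact Phi_fixes P hP (Phi P hP X) (Phi_toeplitz P hP X)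
  · intro X
    constructor
    · rintro ⟨Y, rfl⟩
      exact Phi_toeplitz P hP Y
    · intro hX
      exact ⟨X, Phi_fixes P hP X hX⟩

end
end

section
/- Let T be a contraction on H with Tⁿ → 0 strongly, and suppose V on K ⊇ H is an isometry with V*|_H = T (i.e., V dilates T*), with K minimal, i.e., K is the smallest V-invariant subspace containing H. Then the unitary part of V in its Wold decomposition is zero. -/
open ContinuousLinearMap Filter Topology

open scoped InnerProductSpace in
/-- If `T` is a contraction on `H ⊆ K` with `Tⁿ → 0` strongly, and `V` is a minimal
isometric dilation of `T*` on `K` (so `V* h = T h` for `h ∈ H` and `K` is the closed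
span of `{Vⁿ h}`), then the unitary part of `V` in its Wold decomposition is zero,
i.e. `⋂ₙ Ran Vⁿ = {0}`. -/
theorem unitary_part_zero_of_pure
    {K : Type*} [NormedAddCommGroup K] [InnerProductSpace ℂ K] [CompleteSpace K]
    (V : K →L[ℂ] K) (hViso : ∀ k : K, ‖V k‖ = ‖k‖)
    (H : Submodule ℂ K)
    (T : K →L[ℂ] K) (hTH : ∀ h ∈ H, T h ∈ H)
    (hT : ∀ h ∈ H, adjoint V h = T h)
    (hpure : ∀ h ∈ H, Tendsto (fun n : ℕ => (T ^ n) h) atTop (nhds 0))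
    (hmin : (⨆ n : ℕ, H.map ((V ^ n : K →L[ℂ] K) : K →ₗ[ℂ] K)).topologicalClosure = ⊤) :
    (⨅ n : ℕ, LinearMap.range ((V ^ n : K →L[ℂ] K) : K →ₗ[ℂ] K)) = ⊥ := by
  classical
  have hVinner : ∀ x y : K, ⟪V x, V y⟫_ℂ = ⟪x, y⟫_ℂ := fun x y =>
    (⟨V.toLinearMap, hViso⟩ : K →ₗᵢ[ℂ] K).inner_map_map x y
  have hadjV : ∀ h ∈ H, ∀ z : K, ⟪h, V z⟫_ℂ = ⟪T h, z⟫_ℂ := by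
    intro h hh z
    rw [← hT h hh, adjoint_inner_left]
  have key : ∀ (m : ℕ), ∀ h ∈ H, ∀ y : K, ⟪h, (V ^ m) y⟫_ℂ = ⟪(T ^ m) h, y⟫_ℂ := by
    intro m
    induction m with
    | zero => intro h hh y; simp
    | succ m ih =>
        intro h hh y
        rw [pow_succ', mul_apply_eq_comp, hadjV h hh, ih _ (hTH h hh), pow_succ, mul_apply_eq_comp]
  have hVn : ∀ (n : ℕ) (x y : K), ⟪(V ^ n) x, (V ^ n) y⟫_ℂ = ⟪x, y⟫_ℂ := by
    intro n
    induction n with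
    | zero => simp
    | succ n ih => intro x y; rw [pow_succ', mul_apply_eq_comp, mul_apply_eq_comp, hVinner, ih]
  have hVnnorm : ∀ (n : ℕ) (x : K), ‖(V ^ n) x‖ = ‖x‖ := by
    intro n
    induction n with
    | zero => simp
    | succ n ih => intro x; rw [pow_succ', mul_apply_eq_comp, hViso, ih]
  have hVninj : ∀ (n : ℕ) (x y : K), (V ^ n) x = (V ^ n) y → x = y := by
    intro n x y hxy
    have h0 : ‖(V ^ n) (x - y)‖ = 0 := by rw [map_sub, hxy, sub_self, norm_zero]
    rw [hVnnorm] at h0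
    exact sub_eq_zero.mp (norm_eq_zero.mp h0)
  rw [eq_bot_iff]
  intro k hk
  simp only [Submodule.mem_iInf, LinearMap.mem_range, ContinuousLinearMap.coe_coe] at hk
  have horth : ∀ (n : ℕ), ∀ h ∈ H, ⟪(V ^ n) h, k⟫_ℂ = 0 := by
    intro n h hh
    obtain ⟨y, hy⟩ := hk n
    have hyall : ∀ m : ℕ, ∃ z : K, (V ^ m) z = y := by
      intro m
      obtain ⟨z, hz⟩ := hk (n + m)
      refine ⟨z, hVninj n _ _ ?_⟩
      rw [hy, ← hz, pow_add, mul_apply_eq_comp]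
    have hy0 : ⟪h, y⟫_ℂ = 0 := by
      have hbound : ∀ m : ℕ, ‖⟪h, y⟫_ℂ‖ ≤ ‖(T ^ m) h‖ * ‖y‖ := by
        intro m
        obtain ⟨z, hz⟩ := hyall m
        have he : ⟪h, y⟫_ℂ = ⟪(T ^ m) h, z⟫_ℂ := by rw [← hz, key m h hh]
        have hnz : ‖z‖ = ‖y‖ := by rw [← hz, hVnnorm]
        rw [he, ← hnz]
        exact norm_inner_le_norm _ _
      have hlim : Tendsto (fun m : ℕ => ‖(T ^ m) h‖ * ‖y‖) atTop (nhds 0) := by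
        simpa using (hpure h hh).norm.mul_const ‖y‖
      have hle : ‖⟪h, y⟫_ℂ‖ ≤ 0 := ge_of_tendsto' hlim hbound
      exact norm_eq_zero.mp (le_antisymm hle (norm_nonneg _))
    rw [← hy, hVn, hy0]
  have hker : (⨆ n : ℕ, H.map ((V ^ n : K →L[ℂ] K) : K →ₗ[ℂ] K)) ≤
      LinearMap.ker (innerSL ℂ k : K →ₗ[ℂ] ℂ) := by
    refine iSup_le fun n => ?_
    rintro x ⟨h, hh, rfl⟩
    have := horth n h hh
    simp only [LinearMap.mem_ker, ContinuousLinearMap.coe_coe, innerSL_apply_apply]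
    rw [← inner_conj_symm]
    rw [this, map_zero]
  have hcl : IsClosed ((LinearMap.ker (innerSL ℂ k : K →ₗ[ℂ] ℂ) : Submodule ℂ K) : Set K) :=
    ContinuousLinearMap.isClosed_ker (innerSL ℂ k)
  have h2 : (⨆ n : ℕ, H.map ((V ^ n : K →L[ℂ] K) : K →ₗ[ℂ] K)).topologicalClosure ≤
      LinearMap.ker (innerSL ℂ k : K →ₗ[ℂ] ℂ) :=
    Submodule.topologicalClosure_minimal _ hker hcl
  rw [hmin] at h2
  have hk0 : k ∈ LinearMap.ker (innerSL ℂ k : K →ₗ[ℂ] ℂ) := h2 Submodule.mem_top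
  have hkk : ⟪k, k⟫_ℂ = 0 := by simpa using hk0
  simpa [Submodule.mem_bot] using inner_self_eq_zero.mp hkk
end
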